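/- arXiv:2411.12854 — 2 statements merged into one kernel-verified Lean document; each statement's English description precedes it below -/
import Mathlib

section
/- Let f : ℝ^d → ℝ be convex differentiable with α-Hölder gradient of constant H, let μ be a Borel probability measure on ℝ^d with finite second moment, and let r ∈ (0, 2/(α+1)]. Then for any points x_1, ..., x_n ∈ ℝ^d, the L^r(μ)-norm of x ↦ f(x) − max_i [f(x_i) + ⟨∇f(x_i), x − x_i⟩] is bounded by H · ‖min_i |x − x_i|‖_{L²(μ)}^{α+1}. -/
open scoped RealInnerProductSpace
open MeasureTheory

/-! Every tangent plane of the convex function `f` lies below `f`, so the error is nonnegative.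
Comparing `f` with the tangent plane at the nearest point `x_i` through the tangent plane at `x`
bounds it by `⟪∇f x - ∇f x_i, x - x_i⟫ ≤ H |x - x_i| ^ (α + 1)`. Raising this to the power `r`,
Jensen's inequality for the concave map `t ↦ t ^ (r (α + 1) / 2)` (concave as `r (α + 1) ≤ 2`)
bounds the integral of `min_i |x - x_i| ^ (r (α + 1))` by the corresponding power of
`∫ min_i |x - x_i| ^ 2 dμ`. -/

section FirstOrder

variable {E : Type*} [NormedAddCommGroup E] [NormedSpace ℝ E] {f : E → ℝ}

theorem ConvexOn.le_of_hasFDerivAt (hf : ConvexOn ℝ Set.univ f) {f' : E →L[ℝ] ℝ} {y : E}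
    (hf' : HasFDerivAt f f' y) (x : E) : f y + f' (x - y) ≤ f x := by
  set φ : ℝ → ℝ := f ∘ AffineMap.lineMap y x
  have hφ : ConvexOn ℝ Set.univ φ := by
    simpa using hf.comp_affineMap (AffineMap.lineMap y x)
  have hφ' : HasDerivAt φ (f' (x - y)) 0 := by
    have hline : HasDerivAt (AffineMap.lineMap y x : ℝ → E) (x - y) 0 :=
      AffineMap.hasDerivAt_lineMap
    rw [← AffineMap.lineMap_apply_zero (k := ℝ) y x] at hf'
    exact hf'.comp_hasDerivAt 0 hline
  have hslope := hφ.le_slope_of_hasDerivAt (Set.mem_univ 0) (Set.mem_univ 1) zero_lt_one hφ'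
  simp only [slope_def_field, sub_zero, div_one, φ, Function.comp_apply,
    AffineMap.lineMap_apply_zero, AffineMap.lineMap_apply_one] at hslope
  linarith

end FirstOrder

section Gradient

variable {E : Type*} [NormedAddCommGroup E] [InnerProductSpace ℝ E] [CompleteSpace E]
  {f : E → ℝ} {g : E → E}

theorem ConvexOn.le_of_hasGradientAt (hf : ConvexOn ℝ Set.univ f) {y : E}
    (hg : HasGradientAt f (g y) y) (x : E) : f y + ⟪g y, x - y⟫ ≤ f x := by
  simpa using hf.le_of_hasFDerivAt hg.hasFDerivAt x

theorem ConvexOn.sub_le_inner_sub_gradient (hf : ConvexOn ℝ Set.univ f)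
    (hg : ∀ x, HasGradientAt f (g x) x) (x y : E) :
    f x - (f y + ⟪g y, x - y⟫) ≤ ⟪g x - g y, x - y⟫ := by
  have hx := hf.le_of_hasGradientAt (hg x) y
  rw [← neg_sub x y, inner_neg_right] at hx
  rw [inner_sub_left]
  linarith

theorem ConvexOn.sub_tangent_le_of_holder (hf : ConvexOn ℝ Set.univ f)
    (hg : ∀ x, HasGradientAt f (g x) x) {α H : ℝ} (hα : α + 1 ≠ 0)
    (hHolder : ∀ x y, ‖g x - g y‖ ≤ H * ‖x - y‖ ^ α) (x y : E) :
    f x - (f y + ⟪g y, x - y⟫) ≤ H * ‖x - y‖ ^ (α + 1) :=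
  calc f x - (f y + ⟪g y, x - y⟫) ≤ ⟪g x - g y, x - y⟫ := hf.sub_le_inner_sub_gradient hg x y
    _ ≤ ‖g x - g y‖ * ‖x - y‖ := real_inner_le_norm _ _
    _ ≤ H * ‖x - y‖ ^ α * ‖x - y‖ := by gcongr; exact hHolder x y
    _ = H * ‖x - y‖ ^ (α + 1) := by
      rw [Real.rpow_add_one' (norm_nonneg _) hα, mul_assoc]

variable {ι : Type*} {s : Finset ι} (hs : s.Nonempty) (p : ι → E)

theorem ConvexOn.sup'_tangent_le (hf : ConvexOn ℝ Set.univ f)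
    (hg : ∀ x, HasGradientAt f (g x) x) (x : E) :
    s.sup' hs (fun i => f (p i) + ⟪g (p i), x - p i⟫) ≤ f x :=
  Finset.sup'_le hs _ fun i _ => hf.le_of_hasGradientAt (hg (p i)) x

theorem ConvexOn.sub_sup'_tangent_le (hf : ConvexOn ℝ Set.univ f)
    (hg : ∀ x, HasGradientAt f (g x) x) {α H : ℝ} (hα : α + 1 ≠ 0)
    (hHolder : ∀ x y, ‖g x - g y‖ ≤ H * ‖x - y‖ ^ α) (x : E) :
    f x - s.sup' hs (fun i => f (p i) + ⟪g (p i), x - p i⟫)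
      ≤ H * (s.inf' hs fun i => ‖x - p i‖) ^ (α + 1) := by
  obtain ⟨i, hi, hi_min⟩ := Finset.exists_mem_eq_inf' hs fun i => ‖x - p i‖
  rw [hi_min]
  calc f x - s.sup' hs (fun i => f (p i) + ⟪g (p i), x - p i⟫)
      ≤ f x - (f (p i) + ⟪g (p i), x - p i⟫) := by
        gcongr
        exact Finset.le_sup' (fun i => f (p i) + ⟪g (p i), x - p i⟫) hi
    _ ≤ H * ‖x - p i‖ ^ (α + 1) := hf.sub_tangent_le_of_holder hg hα hHolder x (p i)

end Gradient

section Integral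

variable {X : Type*} [MeasurableSpace X] {μ : Measure X}

theorem MeasureTheory.Integrable.rpow_of_le_one [IsFiniteMeasure μ] {F : X → ℝ}
    (hF : Integrable F μ) (hF0 : ∀ᵐ x ∂μ, 0 ≤ F x) {q : ℝ} (hq0 : 0 ≤ q) (hq1 : q ≤ 1) :
    Integrable (fun x => F x ^ q) μ := by
  have hLp : MemLp (fun x => ‖F x‖ ^ q) (1 / ENNReal.ofReal q) μ := by
    simpa [ENNReal.toReal_ofReal hq0] using
      (memLp_one_iff_integrable.2 hF).norm_rpow_div (ENNReal.ofReal q)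
  have hexp : (1 : ENNReal) ≤ 1 / ENNReal.ofReal q := by
    rw [one_div, ENNReal.one_le_inv]; exact ENNReal.ofReal_le_one.2 hq1
  refine (memLp_one_iff_integrable.1 (hLp.mono_exponent hexp)).congr ?_
  filter_upwards [hF0] with x hx
  rw [Real.norm_of_nonneg hx]

theorem integral_rpow_le_rpow_integral [IsProbabilityMeasure μ] {F : X → ℝ}
    (hF : Integrable F μ) (hF0 : ∀ᵐ x ∂μ, 0 ≤ F x) {q : ℝ} (hq0 : 0 ≤ q) (hq1 : q ≤ 1) :
    ∫ x, F x ^ q ∂μ ≤ (∫ x, F x ∂μ) ^ q :=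
  (Real.concaveOn_rpow hq0 hq1).le_map_integral (Real.continuous_rpow_const hq0).continuousOn
    isClosed_Ici hF0 hF (hF.rpow_of_le_one hF0 hq0 hq1)

theorem rpow_integral_abs_rpow_le [IsProbabilityMeasure μ] {e m : X → ℝ} {H α r : ℝ}
    (hα : 0 < α + 1) (hr : 0 < r) (hrα : r * (α + 1) ≤ 2) (hm0 : ∀ x, 0 ≤ m x)
    (hm2 : Integrable (fun x => m x ^ 2) μ) (he0 : ∀ x, 0 ≤ e x)
    (he : ∀ x, e x ≤ H * m x ^ (α + 1)) :
    (∫ x, |e x| ^ r ∂μ) ^ (1 / r) ≤ H * ((∫ x, m x ^ 2 ∂μ) ^ ((1 : ℝ) / 2)) ^ (α + 1) := by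
  rcases lt_or_ge H 0 with hH | hH
  · have hm : ∀ x, m x = 0 := fun x => by
      by_contra h
      have := Real.rpow_pos_of_pos ((hm0 x).lt_of_ne' h) (α + 1)
      nlinarith [he0 x, he x]
    have he' : ∀ x, e x = 0 := fun x =>
      le_antisymm (by simpa [hm x, Real.zero_rpow hα.ne'] using he x) (he0 x)
    simp [hm, he', Real.zero_rpow hr.ne', Real.zero_rpow hα.ne',
      Real.zero_rpow (inv_ne_zero hr.ne')]
  set q := r * (α + 1) / 2 with hq
  have hq0 : 0 ≤ q := by positivity
  have hq1 : q ≤ 1 := by rw [hq]; linarith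
  have hm2q := hm2.rpow_of_le_one (ae_of_all _ fun x => by positivity) hq0 hq1
  have hpt : ∀ x, |e x| ^ r ≤ H ^ r * (m x ^ 2) ^ q := fun x => by
    have hmq : (m x ^ 2) ^ q = (m x ^ (α + 1)) ^ r := by
      rw [← Real.rpow_natCast, ← Real.rpow_mul (hm0 x), ← Real.rpow_mul (hm0 x), hq]
      ring_nf
    rw [abs_of_nonneg (he0 x), hmq, ← Real.mul_rpow hH (Real.rpow_nonneg (hm0 x) _)]
    exact Real.rpow_le_rpow (he0 x) (he x) hr.le
  have hI : 0 ≤ ∫ x, m x ^ 2 ∂μ := integral_nonneg fun x => by positivity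
  have hint : ∫ x, |e x| ^ r ∂μ ≤ H ^ r * (∫ x, m x ^ 2 ∂μ) ^ q :=
    calc ∫ x, |e x| ^ r ∂μ ≤ ∫ x, H ^ r * (m x ^ 2) ^ q ∂μ :=
          integral_mono_of_nonneg (ae_of_all _ fun x => by positivity) (hm2q.const_mul _)
            (ae_of_all _ hpt)
      _ = H ^ r * ∫ x, (m x ^ 2) ^ q ∂μ := integral_const_mul _ _
      _ ≤ H ^ r * (∫ x, m x ^ 2 ∂μ) ^ q := by
          gcongr
          exact integral_rpow_le_rpow_integral hm2 (ae_of_all _ fun x => by positivity) hq0 hq1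
  calc (∫ x, |e x| ^ r ∂μ) ^ (1 / r) ≤ (H ^ r * (∫ x, m x ^ 2 ∂μ) ^ q) ^ (1 / r) := by
        gcongr
    _ = H * ((∫ x, m x ^ 2 ∂μ) ^ ((1 : ℝ) / 2)) ^ (α + 1) := by
        rw [Real.mul_rpow (by positivity) (by positivity), ← Real.rpow_mul hH,
          ← Real.rpow_mul hI, ← Real.rpow_mul hI, mul_one_div_cancel hr.ne', Real.rpow_one]
        congr 2
        rw [hq]
        field_simp

end Integral

theorem MeasureTheory.MemLp.inf'_norm_sub {E ι : Type*} [NormedAddCommGroup E]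
    [MeasurableSpace E] [OpensMeasurableSpace E] {μ : Measure E} [IsFiniteMeasure μ] {p : ENNReal}
    (hμ : MemLp id p μ) {s : Finset ι} (hs : s.Nonempty) (c : ι → E) :
    MemLp (fun x => s.inf' hs fun i => ‖x - c i‖) p μ := by
  have ⟨i, hi⟩ := hs
  have hmeas : Continuous fun x => s.inf' hs fun i => ‖x - c i‖ :=
    Continuous.finset_inf'_apply hs fun i _ => (continuous_id.sub continuous_const).norm
  refine (hμ.sub (memLp_const (c i))).of_le hmeas.aestronglyMeasurable (ae_of_all _ fun x => ?_)
  rw [Real.norm_of_nonneg (Finset.le_inf' hs _ fun i _ => norm_nonneg _)]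
  exact Finset.inf'_le _ hi

theorem Lr_error_le_quantization (d n : ℕ) (hn : 0 < n)
    (f : EuclideanSpace ℝ (Fin d) → ℝ) (g : EuclideanSpace ℝ (Fin d) → EuclideanSpace ℝ (Fin d))
    (hf : ConvexOn ℝ Set.univ f) (hg : ∀ x, HasGradientAt f (g x) x)
    (α H : ℝ) (hα : 0 < α)
    (hHolder : ∀ x y, ‖g x - g y‖ ≤ H * ‖x - y‖ ^ α)
    (μ : Measure (EuclideanSpace ℝ (Fin d))) [IsProbabilityMeasure μ]
    (hμ : Integrable (fun x => ‖x‖ ^ 2) μ)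
    (r : ℝ) (hr : 0 < r) (hr2 : r ≤ 2 / (α + 1))
    (p : Fin n → EuclideanSpace ℝ (Fin d)) :
    (∫ x, |f x - Finset.univ.sup' (Finset.univ_nonempty_iff.mpr ⟨⟨0, hn⟩⟩)
        (fun i => f (p i) + ⟪g (p i), x - p i⟫)| ^ r ∂μ) ^ (1 / r)
      ≤ H * ((∫ x, (Finset.univ.inf' (Finset.univ_nonempty_iff.mpr ⟨⟨0, hn⟩⟩)
        (fun i => ‖x - p i‖)) ^ 2 ∂μ) ^ ((1 : ℝ) / 2)) ^ (α + 1) := by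
  have hα1 : 0 < α + 1 := by linarith
  have hne : (Finset.univ : Finset (Fin n)).Nonempty := Finset.univ_nonempty_iff.mpr ⟨⟨0, hn⟩⟩
  have hμ2 : MemLp id 2 μ := (memLp_two_iff_integrable_sq_norm aestronglyMeasurable_id).2 hμ
  exact rpow_integral_abs_rpow_le hα1 hr ((le_div_iff₀ hα1).1 hr2)
    (fun x => Finset.le_inf' hne _ fun i _ => norm_nonneg _)
    (hμ2.inf'_norm_sub hne p).integrable_sq
    (fun x => sub_nonneg.2 (hf.sup'_tangent_le hne p hg x))
    (hf.sub_sup'_tangent_le hne p hg hα1.ne' hHolder)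
end

section
/- Let Z be a random vector in ℝ^q whose distribution is radial (OZ has the same law as Z for every orthogonal matrix O), and let A, B ∈ M_{d,q}(ℝ). If B Bᵀ − A Aᵀ is positive semidefinite, then A Z is dominated by B Z in the convex order: E f(AZ) ≤ E f(BZ) for every convex f : ℝ^d → ℝ for which both expectations exist. -/
/-!
By a Douglas-type factorization, `B Bᵀ - A Aᵀ ⪰ 0` gives `A = B C` with `C` a contraction.
A singular value decomposition `C = U diag(s) V` has `|sᵢ| ≤ 1`, and the cube `[-1, 1]ⁿ` is the
convex hull of the sign vectors, so `C` is a convex combination of orthogonal matrices `Oᵢ`.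
Hence `f (A Z) ≤ ∑ wᵢ f (B Oᵢ Z)` pointwise by Jensen, and each `B Oᵢ Z` has the law of `B Z`
because `Z` is radial.
-/

open MeasureTheory Matrix ProbabilityTheory WithLp

namespace LinearMap

theorem exists_comp_rangeRestrict_eq_of_ker_le {R M M₂ M₃ : Type*} [Ring R] [AddCommGroup M]
    [AddCommGroup M₂] [AddCommGroup M₃] [Module R M] [Module R M₂] [Module R M₃]
    (α : M →ₗ[R] M₂) (γ : M →ₗ[R] M₃) (h : ker α ≤ ker γ) :
    ∃ T : range α →ₗ[R] M₃, T ∘ₗ α.rangeRestrict = γ :=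
  ⟨(ker α).liftQ γ h ∘ₗ α.quotKerEquivRange.symm, by
    ext x
    change (ker α).liftQ γ h (α.quotKerEquivRange.symm ⟨α x, mem_range_self α x⟩) = γ x
    rw [quotKerEquivRange_symm_apply_image, Submodule.mkQ_apply, Submodule.liftQ_apply]⟩

variable {𝕜 E F G : Type*} [RCLike 𝕜] [AddCommGroup E] [Module 𝕜 E]
  [NormedAddCommGroup F] [InnerProductSpace 𝕜 F] [NormedAddCommGroup G] [InnerProductSpace 𝕜 G]

theorem ker_le_ker_of_norm_le {α : E →ₗ[𝕜] F} {γ : E →ₗ[𝕜] G} (h : ∀ x, ‖γ x‖ ≤ ‖α x‖) :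
    ker α ≤ ker γ := fun x hx => by
  rw [mem_ker, ← norm_le_zero_iff]
  exact (h x).trans_eq (by rw [mem_ker.mp hx, norm_zero])

variable [FiniteDimensional 𝕜 F]

theorem exists_contraction_comp_eq_of_norm_le (α : E →ₗ[𝕜] F) (γ : E →ₗ[𝕜] G)
    (h : ∀ x, ‖γ x‖ ≤ ‖α x‖) : ∃ T : F →ₗ[𝕜] G, (∀ y, ‖T y‖ ≤ ‖y‖) ∧ T ∘ₗ α = γ := by
  obtain ⟨T, hT⟩ := exists_comp_rangeRestrict_eq_of_ker_le α γ (ker_le_ker_of_norm_le h)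
  set P := (range α).orthogonalProjectionOnto
  refine ⟨T ∘ₗ P.toLinearMap, fun y => ?_, ?_⟩
  · obtain ⟨x, hx⟩ := α.surjective_rangeRestrict (P y)
    calc ‖T (P y)‖ = ‖γ x‖ := by rw [← hx, ← hT]; rfl
      _ ≤ ‖α x‖ := h x
      _ = ‖P y‖ := by rw [← hx]; rfl
      _ ≤ ‖y‖ := Submodule.norm_orthogonalProjectionOnto_apply_le _ y
  · rw [← hT]
    ext x
    exact congrArg T (Submodule.orthogonalProjectionOnto_mem_subspace_eq_self (α.rangeRestrict x))

theorem exists_linearIsometry_comp_eq_of_norm_eq (α γ : E →ₗ[𝕜] F)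
    (h : ∀ x, ‖γ x‖ = ‖α x‖) : ∃ T : F →ₗᵢ[𝕜] F, T.toLinearMap ∘ₗ α = γ := by
  obtain ⟨T, hT⟩ := exists_comp_rangeRestrict_eq_of_ker_le α γ
    (ker_le_ker_of_norm_le fun x => (h x).le)
  have hT_norm : ∀ y, ‖T y‖ = ‖y‖ := fun y => by
    obtain ⟨x, rfl⟩ := α.surjective_rangeRestrict y
    rw [← LinearMap.comp_apply, hT]; exact h x
  refine ⟨LinearIsometry.extend ⟨T, hT_norm⟩, ?_⟩
  rw [← hT]
  ext x
  exact LinearIsometry.extend_apply _ (α.rangeRestrict x)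

end LinearMap

namespace Matrix
variable {m n : Type*} [Fintype m] [Fintype n] [DecidableEq n]

theorem norm_toEuclideanLin_sq (M : Matrix m n ℝ) (x : EuclideanSpace ℝ n) :
    ‖toEuclideanLin M x‖ ^ 2 = ofLp x ⬝ᵥ (Mᵀ * M) *ᵥ ofLp x := by
  rw [← real_inner_self_eq_norm_sq, EuclideanSpace.inner_eq_star_dotProduct, star_trivial,
    ofLp_toLpLin, toLin'_apply, ← mulVec_mulVec, dotProduct_mulVec, ← mulVec_transpose,
    dotProduct_comm]

theorem mem_orthogonalGroup_iff_norm_toEuclideanLin {O : Matrix n n ℝ} :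
    O ∈ orthogonalGroup n ℝ ↔ ∀ x, ‖toEuclideanLin O x‖ = ‖x‖ := by
  rw [mem_orthogonalGroup_iff', ← conjTranspose_eq_transpose_of_trivial, ← star_eq_conjTranspose,
    ← (EquivLike.injective (toEuclideanCLM (n := n) (𝕜 := ℝ))).eq_iff, map_mul, map_one, map_star]
  exact (ContinuousLinearMap.norm_map_iff_adjoint_comp_self _).symm

theorem exists_mem_orthogonalGroup_mul_eq_of_transpose_mul_self_eq [DecidableEq m]
    {C K : Matrix m n ℝ} (h : Kᵀ * K = Cᵀ * C) :
    ∃ O ∈ orthogonalGroup m ℝ, C = O * K := by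
  have hnorm : ∀ x, ‖toEuclideanLin C x‖ = ‖toEuclideanLin K x‖ := fun x => by
    rw [← sq_eq_sq₀ (norm_nonneg _) (norm_nonneg _), norm_toEuclideanLin_sq,
      norm_toEuclideanLin_sq, h]
  obtain ⟨T, hT⟩ := LinearMap.exists_linearIsometry_comp_eq_of_norm_eq _ _ hnorm
  refine ⟨toEuclideanLin.symm T.toLinearMap,
    mem_orthogonalGroup_iff_norm_toEuclideanLin.mpr fun x => ?_, ?_⟩
  · simp
  · apply toEuclideanLin.injective
    rw [toLpLin_mul, LinearEquiv.apply_symm_apply, hT]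

theorem exists_eq_mul_diagonal_mul (D : Matrix n n ℝ) :
    ∃ U ∈ orthogonalGroup n ℝ, ∃ V ∈ orthogonalGroup n ℝ, ∃ s : n → ℝ,
      D = U * diagonal s * V := by
  have hD : (Dᵀ * D).PosSemidef := by
    simpa using posSemidef_conjTranspose_mul_self D
  set U : Matrix n n ℝ := ↑hD.1.eigenvectorUnitary
  have hU : U ∈ orthogonalGroup n ℝ := hD.1.eigenvectorUnitary.2
  set s := fun i => √(hD.1.eigenvalues i)
  -- `U * diagonal s * Uᵀ` is the positive square root of `Dᵀ * D`.
  have hK : (U * diagonal s * Uᵀ)ᵀ * (U * diagonal s * Uᵀ) = Dᵀ * D := by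
    conv_rhs => rw [hD.1.spectral_theorem, Unitary.conjStarAlgAut_apply, star_eq_conjTranspose,
      conjTranspose_eq_transpose_of_trivial]
    simp only [transpose_mul, transpose_transpose, diagonal_transpose, Matrix.mul_assoc]
    rw [← Matrix.mul_assoc Uᵀ, (mem_orthogonalGroup_iff' _ _).mp hU, Matrix.one_mul,
      ← Matrix.mul_assoc (diagonal s), diagonal_mul_diagonal']
    congr 3
    funext i
    exact Real.mul_self_sqrt (hD.eigenvalues_nonneg i)
  obtain ⟨O, hO, hDO⟩ := exists_mem_orthogonalGroup_mul_eq_of_transpose_mul_self_eq hK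
  exact ⟨O * U, mul_mem hO hU, Uᵀ, transpose_mem_unitaryGroup_iff.mpr hU, s,
    by rw [hDO]; simp only [Matrix.mul_assoc]⟩

theorem diagonal_mem_orthogonalGroup {ε : n → ℝ} (hε : ∀ i, ε i = -1 ∨ ε i = 1) :
    diagonal ε ∈ orthogonalGroup n ℝ := by
  rw [mem_orthogonalGroup_iff, diagonal_transpose, diagonal_mul_diagonal, ← diagonal_one]
  congr 1
  funext i
  rcases hε i with h | h <;> simp [h]

theorem mul_diagonal_mul_mem_convexHull_orthogonalGroup {U V : Matrix n n ℝ}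
    (hU : U ∈ orthogonalGroup n ℝ) (hV : V ∈ orthogonalGroup n ℝ) {s : n → ℝ}
    (hs : ∀ i, |s i| ≤ 1) :
    U * diagonal s * V ∈ convexHull ℝ (orthogonalGroup n ℝ : Set (Matrix n n ℝ)) := by
  let Φ : (n → ℝ) →ₗ[ℝ] Matrix n n ℝ :=
    LinearMap.mulLeft ℝ U ∘ₗ LinearMap.mulRight ℝ V ∘ₗ diagonalLinearMap n ℝ ℝ
  have hsigns : s ∈ convexHull ℝ (Set.univ.pi fun _ => ({-1, 1} : Set ℝ)) := by
    rw [convexHull_pi]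
    intro i _
    rw [convexHull_pair, segment_eq_Icc (by norm_num)]
    exact abs_le.mp (hs i)
  have hΦ : Φ '' Set.univ.pi (fun _ => {-1, 1}) ⊆ orthogonalGroup n ℝ := by
    rintro _ ⟨ε, hε, rfl⟩
    exact mul_mem hU (mul_mem (diagonal_mem_orthogonalGroup fun i => hε i trivial) hV)
  have := convexHull_mono hΦ (Φ.image_convexHull _ ▸ Set.mem_image_of_mem Φ hsigns)
  simpa [Φ, Matrix.mul_assoc] using this

theorem abs_le_one_of_norm_toEuclideanLin_le {U V : Matrix n n ℝ} (hU : U ∈ orthogonalGroup n ℝ)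
    (hV : V ∈ orthogonalGroup n ℝ) {s : n → ℝ}
    (h : ∀ x, ‖toEuclideanLin (U * diagonal s * V) x‖ ≤ ‖x‖) (i : n) : |s i| ≤ 1 := by
  have := h (toEuclideanLin Vᵀ (EuclideanSpace.single i 1))
  rw [← LinearMap.comp_apply, ← toLpLin_mul, Matrix.mul_assoc, Matrix.mul_assoc,
    (mem_orthogonalGroup_iff _ _).mp hV, Matrix.mul_one, toLpLin_mul, LinearMap.comp_apply,
    mem_orthogonalGroup_iff_norm_toEuclideanLin.mp hU,
    mem_orthogonalGroup_iff_norm_toEuclideanLin.mp (transpose_mem_unitaryGroup_iff.mpr hV)] at this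
  simpa [toLpLin_apply, EuclideanSpace.single] using this

theorem exists_contraction_mul_transpose_eq_of_posSemidef [DecidableEq m] {A B : Matrix m n ℝ}
    (h : (B * Bᵀ - A * Aᵀ).PosSemidef) :
    ∃ D : Matrix n n ℝ, (∀ x, ‖toEuclideanLin D x‖ ≤ ‖x‖) ∧ A = B * Dᵀ := by
  have hnorm : ∀ x, ‖toEuclideanLin Aᵀ x‖ ≤ ‖toEuclideanLin Bᵀ x‖ := fun x => by
    rw [← sq_le_sq₀ (norm_nonneg _) (norm_nonneg _), norm_toEuclideanLin_sq,
      norm_toEuclideanLin_sq, transpose_transpose, transpose_transpose, ← sub_nonneg,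
      ← dotProduct_sub, ← sub_mulVec]
    simpa using (posSemidef_iff_dotProduct_mulVec.mp h).2 (ofLp x)
  obtain ⟨T, hT, hTB⟩ := LinearMap.exists_contraction_comp_eq_of_norm_le _ _ hnorm
  refine ⟨toEuclideanLin.symm T, by simpa using hT, ?_⟩
  have hDB : toEuclideanLin.symm T * Bᵀ = Aᵀ := toEuclideanLin.injective (by
    rw [toLpLin_mul, LinearEquiv.apply_symm_apply, hTB])
  rw [← transpose_transpose A, ← hDB, transpose_mul, transpose_transpose]

theorem mem_convexHull_mul_orthogonalGroup_of_posSemidef [DecidableEq m] {A B : Matrix m n ℝ}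
    (h : (B * Bᵀ - A * Aᵀ).PosSemidef) :
    A ∈ convexHull ℝ ((B * ·) '' (orthogonalGroup n ℝ : Set (Matrix n n ℝ))) := by
  obtain ⟨D, hD, rfl⟩ := exists_contraction_mul_transpose_eq_of_posSemidef h
  obtain ⟨U, hU, V, hV, s, rfl⟩ := exists_eq_mul_diagonal_mul D
  have hDt : (U * diagonal s * V)ᵀ ∈ convexHull ℝ (orthogonalGroup n ℝ : Set (Matrix n n ℝ)) := by
    rw [transpose_mul, transpose_mul, diagonal_transpose, ← Matrix.mul_assoc]
    exact mul_diagonal_mul_mem_convexHull_orthogonalGroup (transpose_mem_unitaryGroup_iff.mpr hV)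
      (transpose_mem_unitaryGroup_iff.mpr hU) (abs_le_one_of_norm_toEuclideanLin_le hU hV hD)
  have hB := (mulLeftLinearMap n ℝ B).image_convexHull (orthogonalGroup n ℝ : Set (Matrix n n ℝ))
  exact hB ▸ Set.mem_image_of_mem _ hDt

end Matrix

section Radial

variable {Ω m n : Type*} [MeasurableSpace Ω] {P : Measure Ω} [Fintype m] [Fintype n]
  [DecidableEq n] {Z : Ω → n → ℝ}

theorem identDistrib_mulVec_of_map_eq (hZ : Measurable Z)
    (hradial : ∀ O ∈ orthogonalGroup n ℝ, P.map (fun ω => O *ᵥ Z ω) = P.map Z)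
    {O : Matrix n n ℝ} (hO : O ∈ orthogonalGroup n ℝ) :
    IdentDistrib (fun ω => O *ᵥ Z ω) Z P P where
  aemeasurable_fst :=
    ((mulVecLin O).continuous_of_finiteDimensional.measurable.comp hZ).aemeasurable
  aemeasurable_snd := hZ.aemeasurable
  map_eq := hradial O hO

theorem integral_comp_mulVec_le_of_mem_convexHull (hZ : Measurable Z)
    (hradial : ∀ O ∈ orthogonalGroup n ℝ, P.map (fun ω => O *ᵥ Z ω) = P.map Z)
    {f : (m → ℝ) → ℝ} (hf : ConvexOn ℝ Set.univ f) {M B : Matrix m n ℝ}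
    (hM : M ∈ convexHull ℝ ((B * ·) '' (orthogonalGroup n ℝ : Set (Matrix n n ℝ))))
    (hfM : Integrable (fun ω => f (M *ᵥ Z ω)) P) (hfB : Integrable (fun ω => f (B *ᵥ Z ω)) P) :
    ∫ ω, f (M *ᵥ Z ω) ∂P ≤ ∫ ω, f (B *ᵥ Z ω) ∂P := by
  obtain ⟨ι, _, w, C, hw0, hw1, hC, rfl⟩ := mem_convexHull_iff_exists_fintype.mp hM
  choose O hO hBO using hC
  have hfB_cont : Continuous fun v => f (B *ᵥ v) :=
    (continuousOn_univ.mp (hf.continuousOn isOpen_univ)).comp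
      (mulVecLin B).continuous_of_finiteDimensional
  have hident : ∀ i, IdentDistrib (fun ω => f (C i *ᵥ Z ω)) (fun ω => f (B *ᵥ Z ω)) P P := by
    intro i
    simpa only [← hBO i, Function.comp_def, mulVec_mulVec] using
      (identDistrib_mulVec_of_map_eq hZ hradial (hO i)).comp hfB_cont.measurable
  have hintegrable : ∀ i, Integrable (fun ω => w i * f (C i *ᵥ Z ω)) P :=
    fun i => ((hident i).integrable_iff.mpr hfB).const_mul (w i)
  calc ∫ ω, f ((∑ i, w i • C i) *ᵥ Z ω) ∂P
      ≤ ∫ ω, ∑ i, w i * f (C i *ᵥ Z ω) ∂P := by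
        refine integral_mono hfM (integrable_finsetSum _ fun i _ => hintegrable i) fun ω => ?_
        simp only [sum_mulVec, smul_mulVec]
        exact hf.map_sum_le (fun i _ => hw0 i) hw1 (fun i _ => Set.mem_univ _)
    _ = ∑ i, w i * ∫ ω, f (B *ᵥ Z ω) ∂P := by
        rw [integral_finsetSum _ fun i _ => hintegrable i]
        simp only [integral_const_mul, (hident _).integral_eq]
    _ = ∫ ω, f (B *ᵥ Z ω) ∂P := by rw [← Finset.sum_mul, hw1, one_mul]

end Radial

theorem radial_convex_order_general (d q : ℕ)
    (Ω : Type*) [MeasurableSpace Ω] (P : Measure Ω)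
    (Z : Ω → (Fin q → ℝ)) (hZmeas : Measurable Z)
    (hradial : ∀ O ∈ Matrix.orthogonalGroup (Fin q) ℝ,
      Measure.map (fun ω => (O : Matrix (Fin q) (Fin q) ℝ).mulVec (Z ω)) P
        = Measure.map Z P)
    (A B : Matrix (Fin d) (Fin q) ℝ)
    (hpsd : (B * Bᵀ - A * Aᵀ).PosSemidef) :
    ∀ f : (Fin d → ℝ) → ℝ, ConvexOn ℝ Set.univ f →
      Integrable (fun ω => f (A.mulVec (Z ω))) P →
      Integrable (fun ω => f (B.mulVec (Z ω))) P →
      ∫ ω, f (A.mulVec (Z ω)) ∂P ≤ ∫ ω, f (B.mulVec (Z ω)) ∂P :=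
  fun _ hf hfA hfB => integral_comp_mulVec_le_of_mem_convexHull hZmeas hradial hf
    (mem_convexHull_mul_orthogonalGroup_of_posSemidef hpsd) hfA hfB

theorem radial_convex_order (d q : ℕ)
    (Ω : Type*) [MeasurableSpace Ω] (P : Measure Ω) [IsProbabilityMeasure P]
    (Z : Ω → (Fin q → ℝ)) (hZmeas : Measurable Z)
    (hZint : Integrable Z P)
    (hradial : ∀ O ∈ Matrix.orthogonalGroup (Fin q) ℝ,
      Measure.map (fun ω => (O : Matrix (Fin q) (Fin q) ℝ).mulVec (Z ω)) P
        = Measure.map Z P)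
    (A B : Matrix (Fin d) (Fin q) ℝ)
    (hpsd : (B * Bᵀ - A * Aᵀ).PosSemidef) :
    ∀ f : (Fin d → ℝ) → ℝ, ConvexOn ℝ Set.univ f →
      Integrable (fun ω => f (A.mulVec (Z ω))) P →
      Integrable (fun ω => f (B.mulVec (Z ω))) P →
      ∫ ω, f (A.mulVec (Z ω)) ∂P ≤ ∫ ω, f (B.mulVec (Z ω)) ∂P :=
  radial_convex_order_general d q Ω P Z hZmeas hradial A B hpsd
end
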